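/- For k odd and n even, every W[1]-parameterized Resolution refutation of (Ψ_{n,k}, k) must contain, among the axiom clauses it uses, every clause of Γ_Ψ, and hence has size at least binom(n/2, (k+1)/2). (This is the lower bound of the Lemma in Section 3.1, stated there as size at least (n/2)^{k/2}.) -/

import Mathlib

/-- A clause is a finite set of literals; a literal is a pair (variable, polarity). -/
abbrev Clause (V : Type) := Finset (V × Bool)

/-- An assignment satisfies a clause if it makes some literal of the clause true. -/
def satClause {V : Type} (α : V → Bool) (C : Clause V) : Prop :=
  ∃ l ∈ C, α l.1 = l.2

/-- An assignment satisfies a CNF (a set of clauses) if it satisfies every clause. -/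
def satCNF {V : Type} (α : V → Bool) (F : Set (Clause V)) : Prop :=
  ∀ C ∈ F, satClause α C

/-- A Resolution refutation of a set `F` of clauses: a finite sequence of clauses ending in
the empty clause, each clause being an axiom of `F`, a resolvent of two earlier clauses
(from `P ∨ x` and `Q ∨ ¬x` derive `P ∨ Q`), or a weakening of an earlier clause
(from `P` derive `P ∨ l`). Its size is the length of the sequence. -/
structure ResRefutation {V : Type} [DecidableEq V] (F : Set (Clause V)) where
  seq : List (Clause V)
  ne : seq ≠ []
  lastEmpty : seq.getLast ne = (∅ : Clause V)
  valid : ∀ i (hi : i < seq.length),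
    (seq[i]'hi ∈ F) ∨
    (∃ (j l : ℕ) (hj : j < i) (hl : l < i) (x : V) (P Q : Clause V),
      seq[j]'(hj.trans hi) = insert (x, true) P ∧
      seq[l]'(hl.trans hi) = insert (x, false) Q ∧
      seq[i]'hi = P ∪ Q) ∨
    (∃ (j : ℕ) (hj : j < i) (lit : V × Bool),
      seq[i]'hi = insert lit (seq[j]'(hj.trans hi)))

/-- The size of a Resolution refutation: the length of its sequence of clauses. -/
def ResRefutation.size {V : Type} [DecidableEq V] {F : Set (Clause V)}
    (π : ResRefutation F) : ℕ :=
  π.seq.length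

/-- Tree-Resolution derivations from the clause set `F`: each clause occurrence is used as a
premise of at most one inference. A tree-Resolution refutation of `F` is a `ResTree F ∅`. -/
inductive ResTree {V : Type} [DecidableEq V] (F : Set (Clause V)) : Clause V → Type where
  | ax (C : Clause V) (h : C ∈ F) : ResTree F C
  | res (x : V) (P Q : Clause V) (t₁ : ResTree F (insert (x, true) P))
      (t₂ : ResTree F (insert (x, false) Q)) : ResTree F (P ∪ Q)
  | weak (l : V × Bool) (C : Clause V) (t : ResTree F C) : ResTree F (insert l C)

/-- The size of a tree-Resolution derivation: its number of clause occurrences. -/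
def ResTree.size {V : Type} [DecidableEq V] {F : Set (Clause V)} :
    ∀ {C : Clause V}, ResTree F C → ℕ
  | _, .ax _ _ => 1
  | _, .res _ _ _ t₁ t₂ => t₁.size + t₂.size + 1
  | _, .weak _ _ t => t.size + 1

/-- The clauses `¬x_{i₁} ∨ ⋯ ∨ ¬x_{i_{k+1}}` over the variables in `Vars`. -/
def negClausesOn {V : Type} [DecidableEq V] (Vars : Finset V) (k : ℕ) : Set (Clause V) :=
  {C | ∃ S : Finset V, S ⊆ Vars ∧ S.card = k + 1 ∧ C = S.image (fun v => (v, false))}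

/-- The clauses `x_{i₁} ∨ ⋯ ∨ x_{i_{n-k+1}}` over the `n` variables in `Vars`. -/
def posClausesOn {V : Type} [DecidableEq V] (Vars : Finset V) (k : ℕ) : Set (Clause V) :=
  {C | ∃ S : Finset V, S ⊆ Vars ∧ S.card = Vars.card - k + 1 ∧ C = S.image (fun v => (v, true))}

/-- The weight of an assignment: the number of the `n` variables set to true. -/
def weight (n : ℕ) (α : ℕ → Bool) : ℕ :=
  ((Finset.range n).filter (fun i => α i = true)).card
/-- `Θ_{m,k}`: the CNF in the `n = m(k+1)` variables `v^j_i = m*i + j` (`i < k+1`, `j < m`),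
with the `k+1` clauses `v^1_i ∨ ⋯ ∨ v^m_i`. -/
def Theta (m k : ℕ) : Set (Clause ℕ) :=
  {C | ∃ i, i < k + 1 ∧ C = (Finset.range m).image (fun j => (m * i + j, true))}

/-- `Γ_Θ`: the `m^{k+1}` clauses `¬v^{a_1}_1 ∨ ⋯ ∨ ¬v^{a_{k+1}}_{k+1}` with `a_i ∈ [m]`. -/
def GammaTheta (m k : ℕ) : Set (Clause ℕ) :=
  {C | ∃ a : ℕ → ℕ, (∀ i, i < k + 1 → a i < m) ∧
    C = (Finset.range (k + 1)).image (fun i => (m * i + a i, false))}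

/-- `Ψ_{n,k}` (for `n` even): the CNF in variables `v_0, …, v_{n-1}` with clauses
`v_{2i} ∨ ¬v_{2i+1}` and `v_{2i+1} ∨ ¬v_{2i}` (i.e. `v_{2i} ↔ v_{2i+1}`). -/
def Psi (n : ℕ) : Set (Clause ℕ) :=
  {C | ∃ i, 2 * i + 1 < n ∧
    (C = {(2 * i, true), (2 * i + 1, false)} ∨ C = {(2 * i + 1, true), (2 * i, false)})}

/-- `Γ_Ψ` (for `k` odd): the `binom(n/2, (k+1)/2)` clauses
`¬v_{2a_1} ∨ ¬v_{2a_1+1} ∨ ⋯ ∨ ¬v_{2a_{(k+1)/2}} ∨ ¬v_{2a_{(k+1)/2}+1}` over sets `A` of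
`(k+1)/2` pairs. -/
def GammaPsi (n k : ℕ) : Set (Clause ℕ) :=
  {C | ∃ A : Finset ℕ, A ⊆ Finset.range (n / 2) ∧ A.card = (k + 1) / 2 ∧
    C = (A.biUnion (fun a => ({2 * a, 2 * a + 1} : Finset ℕ))).image (fun v => (v, false))}

/-!
An assignment falsifies some axiom used by any Resolution refutation, since the rules are
sound. For a set `A` of `(k+1)/2` pairs, set exactly the variables `v_{2a}, v_{2a+1}`
(`a ∈ A`) to true. This satisfies `Ψ_{n,k}` and, having weight between `k` and `k + 1`, every
positive clause and every negative clause except the one over its own true variables, which is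
the clause of `Γ_Ψ` indexed by `A`. So that clause occurs in every refutation, and distinct
`A` give distinct clauses.
-/

section Soundness

variable {V : Type} {α : V → Bool}

lemma not_satClause_empty : ¬ satClause α (∅ : Clause V) := by
  simp [satClause]

variable [DecidableEq V]

lemma satClause_insert (l : V × Bool) {C : Clause V} (h : satClause α C) :
    satClause α (insert l C) :=
  let ⟨l', hl', hα⟩ := h
  ⟨l', Finset.mem_insert_of_mem hl', hα⟩

lemma satClause_union_of_resolve {x : V} {P Q : Clause V}
    (hP : satClause α (insert (x, true) P)) (hQ : satClause α (insert (x, false) Q)) :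
    satClause α (P ∪ Q) := by
  obtain ⟨a, ha, hαa⟩ := hP
  obtain ⟨b, hb, hαb⟩ := hQ
  rcases Finset.mem_insert.1 ha with rfl | haP
  · rcases Finset.mem_insert.1 hb with rfl | hbQ
    · simp_all
    · exact ⟨b, Finset.mem_union_right P hbQ, hαb⟩
  · exact ⟨a, Finset.mem_union_left Q haP, hαa⟩

namespace ResRefutation

variable {F : Set (Clause V)} (π : ResRefutation F)

lemma satClause_getElem (hF : ∀ C ∈ F, C ∈ π.seq → satClause α C) :
    ∀ i (hi : i < π.seq.length), satClause α (π.seq[i]'hi) := by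
  intro i
  induction i using Nat.strong_induction_on with
  | _ i ih =>
    intro hi
    rcases π.valid i hi with hax | ⟨j, l, hj, hl, x, P, Q, hjP, hlQ, hres⟩ | ⟨j, hj, lit, hweak⟩
    · exact hF _ hax (List.getElem_mem hi)
    · rw [hres]
      exact satClause_union_of_resolve (hjP ▸ ih j hj _) (hlQ ▸ ih l hl _)
    · rw [hweak]
      exact satClause_insert lit (ih j hj _)

lemma exists_mem_not_satClause (α : V → Bool) : ∃ C ∈ F, C ∈ π.seq ∧ ¬ satClause α C := by
  by_contra! hF
  have hlast := π.satClause_getElem hF _ (List.length_pos_iff.2 π.ne |> Nat.sub_one_lt_of_lt)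
  rw [← List.getLast_eq_getElem π.ne, π.lastEmpty] at hlast
  exact not_satClause_empty hlast

lemma mem_seq_of_not_satClause_imp_eq {C₀ : Clause V}
    (hF : ∀ C ∈ F, ¬ satClause α C → C = C₀) : C₀ ∈ π.seq := by
  obtain ⟨C, hCF, hCπ, hC⟩ := π.exists_mem_not_satClause α
  exact hF C hCF hC ▸ hCπ

end ResRefutation

end Soundness

section CardinalityClauses

variable {V : Type} [DecidableEq V] {Vars T : Finset V} {k : ℕ}

lemma eq_of_not_satClause_of_mem_negClausesOn (hT : T.card ≤ k + 1) {C : Clause V}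
    (hC : C ∈ negClausesOn Vars k) (hsat : ¬ satClause (fun v => decide (v ∈ T)) C) :
    C = T.image (fun v => (v, false)) := by
  obtain ⟨S, -, hScard, rfl⟩ := hC
  have hST : S ⊆ T := fun v hv => by
    by_contra hvT
    exact hsat ⟨(v, false), Finset.mem_image_of_mem _ hv, by simpa using hvT⟩
  rw [Finset.eq_of_subset_of_card_le hST (hScard ▸ hT)]

lemma satClause_of_mem_posClausesOn (hTVars : T ⊆ Vars) (hT : k ≤ T.card) {C : Clause V}
    (hC : C ∈ posClausesOn Vars k) : satClause (fun v => decide (v ∈ T)) C := by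
  obtain ⟨S, hSVars, hScard, rfl⟩ := hC
  by_contra hsat
  have hS : S ⊆ Vars \ T := fun v hv => by
    refine Finset.mem_sdiff.2 ⟨hSVars hv, fun hvT => hsat ?_⟩
    exact ⟨(v, true), Finset.mem_image_of_mem _ hv, by simpa using hvT⟩
  have := Finset.card_le_card hS
  rw [Finset.card_sdiff_of_subset hTVars] at this
  have := Finset.card_le_card hTVars
  omega

end CardinalityClauses

def pairUnion (A : Finset ℕ) : Finset ℕ :=
  A.biUnion (fun a => ({2 * a, 2 * a + 1} : Finset ℕ))

lemma mem_pairUnion {A : Finset ℕ} {v : ℕ} : v ∈ pairUnion A ↔ v / 2 ∈ A := by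
  simp only [pairUnion, Finset.mem_biUnion, Finset.mem_insert, Finset.mem_singleton]
  constructor
  · rintro ⟨a, ha, h | h⟩ <;> convert ha using 1 <;> omega
  · exact fun h => ⟨v / 2, h, by omega⟩

lemma card_pairUnion (A : Finset ℕ) : (pairUnion A).card = 2 * A.card := by
  rw [pairUnion, Finset.card_biUnion]
  · simp [mul_comm]
  · intro a _ b _ hab
    simp only [Finset.disjoint_left, Finset.mem_insert, Finset.mem_singleton]
    omega

lemma pairUnion_injective : Function.Injective pairUnion := by
  intro A B h
  ext a
  simpa [mem_pairUnion] using congrArg (2 * a ∈ ·) h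

lemma pairUnion_subset_range {A : Finset ℕ} {m : ℕ} (hA : A ⊆ Finset.range (m / 2)) :
    pairUnion A ⊆ Finset.range m := fun v hv => by
  have := Finset.mem_range.1 (hA (mem_pairUnion.1 hv))
  rw [Finset.mem_range]
  omega

lemma satCNF_Psi_of_pairUnion (n : ℕ) (A : Finset ℕ) :
    satCNF (fun v => decide (v ∈ pairUnion A)) (Psi n) := by
  have hpair : ∀ i, (2 * i ∈ pairUnion A ↔ 2 * i + 1 ∈ pairUnion A) := fun i => by
    simp only [mem_pairUnion]
    rw [show 2 * i / 2 = i by omega, show (2 * i + 1) / 2 = i by omega]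
  rintro C ⟨i, -, rfl | rfl⟩ <;> by_cases h : 2 * i ∈ pairUnion A
  · exact ⟨(2 * i, true), by simp, by simpa using h⟩
  · exact ⟨(2 * i + 1, false), by simp, by simpa [← hpair] using h⟩
  · exact ⟨(2 * i + 1, true), by simp, by simpa [← hpair] using h⟩
  · exact ⟨(2 * i, false), by simp, by simpa using h⟩

lemma image_pairUnion_mem_seq {n k : ℕ}
    (π : ResRefutation (Psi n ∪ negClausesOn (Finset.range n) k ∪
      posClausesOn (Finset.range n) k))
    {A : Finset ℕ} (hA : A ⊆ Finset.range (n / 2)) (hcard : A.card = (k + 1) / 2) :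
    (pairUnion A).image (fun v => (v, false)) ∈ π.seq := by
  have hTcard := card_pairUnion A
  apply π.mem_seq_of_not_satClause_imp_eq
  rintro C ((hpsi | hneg) | hpos) hsat
  · exact absurd (satCNF_Psi_of_pairUnion n A C hpsi) hsat
  · exact eq_of_not_satClause_of_mem_negClausesOn (by omega) hneg hsat
  · exact absurd (satClause_of_mem_posClausesOn (pairUnion_subset_range hA) (by omega) hpos) hsat

theorem psi_W1_lower_bound_general (n k : ℕ)
    (π : ResRefutation (Psi n ∪ negClausesOn (Finset.range n) k ∪
      posClausesOn (Finset.range n) k)) :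
    (∀ γ ∈ GammaPsi n k, γ ∈ π.seq) ∧ Nat.choose (n / 2) ((k + 1) / 2) ≤ π.size := by
  have hGamma : ∀ γ ∈ GammaPsi n k, γ ∈ π.seq := by
    rintro γ ⟨A, hA, hcard, rfl⟩
    exact image_pairUnion_mem_seq π hA hcard
  refine ⟨hGamma, ?_⟩
  calc Nat.choose (n / 2) ((k + 1) / 2)
      = (Finset.powersetCard ((k + 1) / 2) (Finset.range (n / 2))).card := by
        rw [Finset.card_powersetCard, Finset.card_range]
    _ ≤ π.seq.toFinset.card := by
        refine Finset.card_le_card_of_injOn (fun A => (pairUnion A).image (fun v => (v, false)))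
          (fun A hA => ?_) ((Finset.image_injective (Prod.mk_left_injective false)).comp
            pairUnion_injective).injOn
        obtain ⟨hAsub, hAcard⟩ := Finset.mem_powersetCard.1 hA
        exact List.mem_toFinset.2 (image_pairUnion_mem_seq π hAsub hAcard)
    _ ≤ π.size := π.seq.toFinset_card_le

/-- lower bound of the Lemma in Section 3.1: for `k` odd and `n` even,
every `W[1]`-parameterized Resolution refutation of `(Ψ_{n,k}, k)` — i.e. every Resolution
refutation of `Ψ_{n,k}` together with all clauses `¬x_{i₁} ∨ ⋯ ∨ ¬x_{i_{k+1}}` and all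
clauses `x_{i₁} ∨ ⋯ ∨ x_{i_{n-k+1}}` over its `n` variables — must contain, among the
clauses appearing in it, every clause of `Γ_Ψ`, and hence has size at least
`binom(n/2, (k+1)/2)`. -/
theorem psi_W1_lower_bound (n k : ℕ) (hn : Even n) (hk : Odd k)
    (π : ResRefutation (Psi n ∪ negClausesOn (Finset.range n) k ∪
      posClausesOn (Finset.range n) k)) :
    (∀ γ ∈ GammaPsi n k, γ ∈ π.seq) ∧ Nat.choose (n / 2) ((k + 1) / 2) ≤ π.size :=
  psi_W1_lower_bound_general n k π
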